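/- Let p ≥ 2, γ ≥ 1 and a, b, c, d ∈ ℝ. Then (J_p(a-c) - J_p(b-d))·(J_{γ+1}(a-b) - J_{γ+1}(c-d)) ≥ C(p,γ)·| |a-b|^((γ-1)/p)·(a-b) - |c-d|^((γ-1)/p)·(c-d) |^p, where C(p,γ) = (γ/(3·2^(p-1)))·(p/(γ-1+p))^p. -/

import Mathlib

/-!
Write `φ_θ u = |u| ^ θ * u`, so that `J r = φ_(r-2)`. Exchanging `(a, b)` with `(c, d)` we may
assume `c - d ≤ a - b`, and then both factors on the right are nonnegative. Since
`(a - c) - (b - d) = (a - b) - (c - d)`, the first factor is at least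
`2^(2-p) (a - b - c + d)^(p-1)`, by superadditivity and the power-mean inequality for `u^(p-1)`.

For the second factor put `θ = (γ - 1) / p`. The bound
`γ (φ_θ s - φ_θ t)^p ≤ (θ + 1)^p (s - t)^(p-1) (φ_(γ-1) s - φ_(γ-1) t)` is Hölder's inequality
for `∫ₜˢ φ_θ'`, proved here without integrals: Young's inequality applied to
`φ_θ' = (θ + 1) |u|^θ` makes `K^(1-p)/p · (θ + 1)^p/γ · φ_(γ-1) + K (p-1)/p · id - φ_θ`
monotone for every `K > 0`, and optimising in `K` gives the bound.
-/

open Real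

noncomputable def J (r t : ℝ) : ℝ := |t| ^ (r - 2) * t

open Set

lemma abs_rpow_mul_self_of_nonneg {c u : ℝ} (hc : 0 ≤ c) (hu : 0 ≤ u) :
    |u| ^ c * u = u ^ (c + 1) := by
  rw [abs_of_nonneg hu, rpow_add_one' hu (by linarith)]

lemma abs_rpow_mul_self_neg (c u : ℝ) : |-u| ^ c * -u = -(|u| ^ c * u) := by
  rw [abs_neg, mul_neg]

lemma strictMono_abs_rpow_mul_self {c : ℝ} (hc : 0 ≤ c) :
    StrictMono fun u : ℝ => |u| ^ c * u := by
  have hIci : StrictMonoOn (fun u : ℝ => |u| ^ c * u) (Ici 0) := fun u hu v hv huv => by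
    simp only [abs_rpow_mul_self_of_nonneg hc hu, abs_rpow_mul_self_of_nonneg hc hv]
    exact rpow_lt_rpow hu huv (by linarith)
  have hIic : StrictMonoOn (fun u : ℝ => |u| ^ c * u) (Iic 0) := fun u hu v hv huv => by
    have := hIci (mem_Ici.2 (neg_nonneg.2 hv)) (mem_Ici.2 (neg_nonneg.2 hu)) (neg_lt_neg huv)
    simp only [abs_rpow_mul_self_neg] at this
    exact neg_lt_neg_iff.1 this
  exact hIic.Iic_union_Ici hIci

lemma hasDerivAt_abs_rpow_mul_self {c : ℝ} (hc : 0 ≤ c) (u : ℝ) :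
    HasDerivAt (fun u : ℝ => |u| ^ c * u) ((c + 1) * |u| ^ c) u := by
  have hIci : ∀ u : ℝ,
      HasDerivWithinAt (fun u : ℝ => |u| ^ c * u) ((c + 1) * |u| ^ c) (Ici 0) u := by
    intro u
    by_cases hu : 0 ≤ u
    · have h := (hasDerivAt_rpow_const (x := u) (p := c + 1)
        (Or.inr (by linarith))).hasDerivWithinAt (s := Ici 0)
      refine (h.congr (fun v hv => abs_rpow_mul_self_of_nonneg hc hv)
        (abs_rpow_mul_self_of_nonneg hc hu)).congr_deriv ?_
      rw [add_sub_cancel_right, abs_of_nonneg hu]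
    · exact HasFDerivWithinAt.of_notMem_closure (by simpa using hu)
  have hIic : HasDerivWithinAt (fun u : ℝ => |u| ^ c * u) ((c + 1) * |u| ^ c) (Iic 0) u := by
    have h := ((hIci (-u)).comp u ((hasDerivAt_neg u).hasDerivWithinAt (s := Iic 0))
      fun v hv => mem_Ici.2 (neg_nonneg.2 hv)).neg
    have hodd : ∀ v : ℝ, |v| ^ c * v = -(|-v| ^ c * -v) := fun v => by
      rw [abs_rpow_mul_self_neg, neg_neg]
    refine (h.congr (fun v _ => hodd v) (hodd u)).congr_deriv ?_
    rw [abs_neg]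
    ring
  simpa [Iic_union_Ici] using hIic.union (hIci u)

lemma rpow_sub_le_rpow_sub_rpow {x y q : ℝ} (hy : 0 ≤ y) (hxy : y ≤ x) (hq : 1 ≤ q) :
    (x - y) ^ q ≤ x ^ q - y ^ q := by
  have h := add_rpow_le_rpow_add hy (sub_nonneg.2 hxy) hq
  rw [add_sub_cancel] at h
  linarith

lemma rpow_add_le_two_rpow_mul {a b q : ℝ} (ha : 0 ≤ a) (hb : 0 ≤ b) (hq : 1 ≤ q) :
    (a + b) ^ q ≤ 2 ^ (q - 1) * (a ^ q + b ^ q) := by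
  lift a to NNReal using ha
  lift b to NNReal using hb
  exact_mod_cast NNReal.rpow_add_le_mul_rpow_add_rpow a b hq

lemma two_rpow_mul_sub_rpow_le_abs_rpow_mul_sub {p x y : ℝ} (hp : 2 ≤ p) (hxy : y ≤ x) :
    2 ^ (2 - p) * (x - y) ^ (p - 1) ≤ |x| ^ (p - 2) * x - |y| ^ (p - 2) * y := by
  have hq : 1 ≤ p - 1 := by linarith
  have hφ : ∀ u : ℝ, 0 ≤ u → |u| ^ (p - 2) * u = u ^ (p - 1) := fun u hu => by
    rw [abs_rpow_mul_self_of_nonneg (by linarith) hu]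
    ring_nf
  have hnonneg : ∀ x y : ℝ, 0 ≤ y → y ≤ x →
      2 ^ (2 - p) * (x - y) ^ (p - 1) ≤ |x| ^ (p - 2) * x - |y| ^ (p - 2) * y := by
    intro x y hy hxy
    rw [hφ x (hy.trans hxy), hφ y hy]
    calc 2 ^ (2 - p) * (x - y) ^ (p - 1) ≤ (x - y) ^ (p - 1) :=
          mul_le_of_le_one_left (rpow_nonneg (sub_nonneg.2 hxy) _)
            (rpow_le_one_of_one_le_of_nonpos one_le_two (by linarith))
      _ ≤ x ^ (p - 1) - y ^ (p - 1) := rpow_sub_le_rpow_sub_rpow hy hxy hq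
  rcases le_or_gt 0 y with hy | hy
  · exact hnonneg x y hy hxy
  rcases le_or_gt x 0 with hx | hx
  · have h := hnonneg (-y) (-x) (by linarith) (by linarith)
    rw [abs_rpow_mul_self_neg, abs_rpow_mul_self_neg, neg_sub_neg] at h
    linarith
  · have hy' : |y| ^ (p - 2) * y = -(-y) ^ (p - 1) := by
      rw [← hφ (-y) (by linarith), abs_rpow_mul_self_neg, neg_neg]
    rw [hφ x hx.le, hy', sub_neg_eq_add]
    calc 2 ^ (2 - p) * (x - y) ^ (p - 1)
        ≤ 2 ^ (2 - p) * (2 ^ (p - 1 - 1) * (x ^ (p - 1) + (-y) ^ (p - 1))) := by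
          rw [sub_eq_add_neg]
          gcongr
          exact rpow_add_le_two_rpow_mul hx.le (by linarith) hq
      _ = x ^ (p - 1) + (-y) ^ (p - 1) := by
          rw [← mul_assoc, ← rpow_add two_pos, show 2 - p + (p - 1 - 1) = 0 by ring, rpow_zero,
            one_mul]

lemma young_inequality_scaled {p K w : ℝ} (hp : 1 < p) (hK : 0 < K) (hw : 0 ≤ w) :
    w ≤ K ^ (1 - p) * w ^ p / p + K * (p - 1) / p := by
  have hp0 : 0 < p := by linarith
  have h := young_inequality_of_nonneg (mul_nonneg hw (rpow_nonneg hK.le ((1 - p) / p)))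
    (rpow_nonneg hK.le ((p - 1) / p)) (HolderConjugate.conjExponent hp)
  have e1 : w * K ^ ((1 - p) / p) * K ^ ((p - 1) / p) = w := by
    rw [mul_assoc, ← rpow_add hK, show (1 - p) / p + (p - 1) / p = 0 by ring, rpow_zero, mul_one]
  have e2 : (w * K ^ ((1 - p) / p)) ^ p = K ^ (1 - p) * w ^ p := by
    rw [mul_rpow hw (rpow_nonneg hK.le _), ← rpow_mul hK.le, div_mul_cancel₀ _ hp0.ne',
      mul_comm]
  have e3 : (K ^ ((p - 1) / p)) ^ (p / (p - 1)) = K := by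
    have : p - 1 ≠ 0 := by linarith
    rw [← rpow_mul hK.le, show (p - 1) / p * (p / (p - 1)) = 1 by field_simp, rpow_one]
  rwa [conjExponent, e1, e2, e3, div_div_eq_mul_div] at h

lemma monotone_young_combination {c p K : ℝ} (hc : 0 ≤ c) (hp : 1 < p) (hK : 0 < K) :
    Monotone fun u : ℝ => K ^ (1 - p) / p * ((c + 1) ^ p / (c * p + 1)) * (|u| ^ (c * p) * u)
      + K * (p - 1) / p * u - |u| ^ c * u := by
  have hcp : 0 ≤ c * p := mul_nonneg hc (by linarith)
  refine monotone_of_hasDerivAt_nonneg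
    (fun u => ((((hasDerivAt_abs_rpow_mul_self hcp u).const_mul _).add
      ((hasDerivAt_id u).const_mul _)).sub (hasDerivAt_abs_rpow_mul_self hc u))) fun u => ?_
  have hw : 0 ≤ (c + 1) * |u| ^ c := mul_nonneg (by linarith) (rpow_nonneg (abs_nonneg u) c)
  have hwp : ((c + 1) * |u| ^ c) ^ p = (c + 1) ^ p * |u| ^ (c * p) := by
    rw [mul_rpow (by linarith) (rpow_nonneg (abs_nonneg u) c), ← rpow_mul (abs_nonneg u)]
  have hyoung := young_inequality_scaled hp hK hw
  rw [hwp] at hyoung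
  have hcp1 : c * p + 1 ≠ 0 := by positivity
  have e : K ^ (1 - p) / p * ((c + 1) ^ p / (c * p + 1)) * ((c * p + 1) * |u| ^ (c * p))
      = K ^ (1 - p) * ((c + 1) ^ p * |u| ^ (c * p)) / p := by
    field_simp
  simp only [Pi.zero_apply]
  rw [e]
  linarith

lemma rpow_le_of_forall_le_young {p B X D : ℝ} (hp : 0 < p) (hB : 0 < B) (hX : 0 < X)
    (hD : 0 ≤ D) (h : ∀ K : ℝ, 0 < K → D ≤ K ^ (1 - p) / p * X + K * (p - 1) / p * B) :
    D ^ p ≤ X * B ^ (p - 1) := by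
  set K := (X / B) ^ p⁻¹
  have hK : 0 < K := rpow_pos_of_pos (div_pos hX hB) _
  have hKp : K ^ p = X / B := by
    rw [← rpow_mul (div_pos hX hB).le, inv_mul_cancel₀ hp.ne', rpow_one]
  -- the minimum over `K` of the right-hand side of `h`, attained where `K ^ p = X / B`
  have hmin : K ^ (1 - p) / p * X + K * (p - 1) / p * B = K * B := by
    have hX' : X = K ^ p * B := by rw [hKp, div_mul_cancel₀ _ hB.ne']
    rw [hX', rpow_sub hK, rpow_one]
    field_simp
    ring
  calc D ^ p ≤ (K * B) ^ p := rpow_le_rpow hD (hmin ▸ h K hK) hp.le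
    _ = X * B ^ (p - 1) := by
      rw [mul_rpow hK.le hB.le, hKp, rpow_sub_one hB.ne']
      field_simp

lemma abs_rpow_mul_sub_rpow_le {c p s t : ℝ} (hc : 0 ≤ c) (hp : 1 < p) (hts : t ≤ s) :
    (|s| ^ c * s - |t| ^ c * t) ^ p
      ≤ (c + 1) ^ p / (c * p + 1) * (|s| ^ (c * p) * s - |t| ^ (c * p) * t)
          * (s - t) ^ (p - 1) := by
  rcases hts.eq_or_lt with rfl | hts
  · simp [zero_rpow (by linarith : p ≠ 0)]
  have hcp : 0 ≤ c * p := mul_nonneg hc (by linarith)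
  have hC : 0 < |s| ^ (c * p) * s - |t| ^ (c * p) * t :=
    sub_pos.2 (strictMono_abs_rpow_mul_self hcp hts)
  refine rpow_le_of_forall_le_young (p := p) (by linarith) (sub_pos.2 hts)
    (mul_pos (div_pos (by positivity) (by linarith)) hC)
    (sub_nonneg.2 (strictMono_abs_rpow_mul_self hc hts).le) fun K hK => ?_
  have h := monotone_young_combination hc hp hK hts.le
  dsimp only at h
  linarith

lemma mul_rpow_abs_rpow_mul_sub_le {p γ s t : ℝ} (hp : 1 < p) (hγ : 1 ≤ γ) (hts : t ≤ s) :
    γ * (|s| ^ ((γ - 1) / p) * s - |t| ^ ((γ - 1) / p) * t) ^ p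
      ≤ ((γ - 1 + p) / p) ^ p * (s - t) ^ (p - 1)
          * (|s| ^ (γ - 1) * s - |t| ^ (γ - 1) * t) := by
  have hp0 : 0 < p := by linarith
  have h := abs_rpow_mul_sub_rpow_le (div_nonneg (by linarith : 0 ≤ γ - 1) hp0.le) hp hts
  rw [div_mul_cancel₀ _ hp0.ne', sub_add_cancel, div_add_one hp0.ne'] at h
  calc γ * _ ≤ γ * (((γ - 1 + p) / p) ^ p / γ * (|s| ^ (γ - 1) * s - |t| ^ (γ - 1) * t)
        * (s - t) ^ (p - 1)) := by gcongr
    _ = _ := by field_simp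

lemma const_mul_abs_rpow_sub_le_of_sub_eq_sub {p γ x y s t : ℝ} (hp : 2 ≤ p) (hγ : 1 ≤ γ)
    (hd : x - y = s - t) (hts : t ≤ s) :
    γ / (3 * 2 ^ (p - 1)) * (p / (γ - 1 + p)) ^ p *
        |(|s| ^ ((γ - 1) / p) * s - |t| ^ ((γ - 1) / p) * t)| ^ p
      ≤ (|x| ^ (p - 2) * x - |y| ^ (p - 2) * y) * (|s| ^ (γ - 1) * s - |t| ^ (γ - 1) * t) := by
  have hp0 : 0 < p := by linarith
  have hD := sub_nonneg.2 ((strictMono_abs_rpow_mul_self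
    (div_nonneg (by linarith : 0 ≤ γ - 1) hp0.le)).monotone hts)
  have hC := sub_nonneg.2 ((strictMono_abs_rpow_mul_self (by linarith : 0 ≤ γ - 1)).monotone hts)
  have hJ := two_rpow_mul_sub_rpow_le_abs_rpow_mul_sub hp (sub_nonneg.1 (hd ▸ sub_nonneg.2 hts))
  rw [hd] at hJ
  have hHolder := mul_rpow_abs_rpow_mul_sub_le (p := p) (by linarith) hγ hts
  set D := |s| ^ ((γ - 1) / p) * s - |t| ^ ((γ - 1) / p) * t
  set C := |s| ^ (γ - 1) * s - |t| ^ (γ - 1) * t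
  set M := ((γ - 1 + p) / p) ^ p
  set T : ℝ := 2 ^ (p - 1)
  have hM : 0 < M := by positivity
  have hT : 0 < T := by positivity
  have h2T : (2 : ℝ) ^ (2 - p) = 2 / T := by
    rw [show 2 - p = 1 - (p - 1) by ring, rpow_sub two_pos, rpow_one]
  have hB := rpow_nonneg (sub_nonneg.2 hts) (p - 1)
  rw [abs_of_nonneg hD, ← inv_div (γ - 1 + p), inv_rpow (by positivity)]
  calc γ / (3 * T) * M⁻¹ * D ^ p = γ * D ^ p / (3 * T * M) := by field_simp
    _ ≤ M * (s - t) ^ (p - 1) * C / (3 * T * M) := by gcongr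
    _ = (s - t) ^ (p - 1) * C / (3 * T) := by field_simp
    _ ≤ 2 ^ (2 - p) * (s - t) ^ (p - 1) * C := by
        rw [h2T, div_mul_eq_mul_div, div_mul_eq_mul_div, div_le_div_iff₀ (by positivity) hT]
        nlinarith [mul_nonneg hB hC]
    _ ≤ (|x| ^ (p - 2) * x - |y| ^ (p - 2) * y) * C := mul_le_mul_of_nonneg_right hJ hC

theorem stmt1 (p γ a b c d : ℝ) (hp : 2 ≤ p) (hγ : 1 ≤ γ) :
    (γ / (3 * 2 ^ (p - 1))) * (p / (γ - 1 + p)) ^ p *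
        |(|a - b| ^ ((γ - 1) / p) * (a - b) - |c - d| ^ ((γ - 1) / p) * (c - d))| ^ p
      ≤ (J p (a - c) - J p (b - d)) * (J (γ + 1) (a - b) - J (γ + 1) (c - d)) := by
  simp only [J]
  rw [show γ + 1 - 2 = γ - 1 by ring]
  rcases le_total (c - d) (a - b) with h | h
  · exact const_mul_abs_rpow_sub_le_of_sub_eq_sub hp hγ (by ring) h
  · rw [abs_sub_comm]
    exact (const_mul_abs_rpow_sub_le_of_sub_eq_sub (x := b - d) (y := a - c) hp hγ (by ring)
      h).trans_eq (by ring)
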